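/- Let A be a bicomplete abelian category (having all small limits and colimits), and let (𝒳, 𝒴) be a cotorsion pair of chain complexes over A, meaning 𝒳 = { X : Ext^1(X,Y) = 0 for all Y ∈ 𝒴 } and 𝒴 = { Y : Ext^1(X,Y) = 0 for all X ∈ 𝒳 }, where Ext^1 is computed in the abelian category Ch(A) of chain complexes over A. Let 𝒞 be a class of objects of A. If the disk complexes D^n(C) lie in 𝒴 for every integer n and every C ∈ 𝒞, then every bounded below acyclic chain complex all of whose cycle objects lie in 𝒞 is also in 𝒴. -/

import Mathlib

/-!
A short exact sequence `0 → X → E → K → 0` with `K ∈ 𝒳` is split by a chain map `K → E` built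
degree by degree from below, starting where `X` vanishes and `E_n → K_n` is an isomorphism.
Since `D^{n+1}` is an exact right adjoint of evaluation in degree `n`, `Ext¹(K, D^{n+1} C) = 0`
forces `Ext¹(K_n, C) = 0`, so maps out of `K_n` lift along epimorphisms with kernel in `𝒞`. Given
the section `s` in degree `n - 1`, a section `t` in degree `n` with `t d = d s` is exactly a lift of
`(d s, 1) : K_n → Z_{n-1}E ×_{K_{n-1}} K_n` along `(d, g) : E_n → Z_{n-1}E ×_{K_{n-1}} K_n`, and
acyclicity of `X` makes the latter an epimorphism with kernel `Z_n X`.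
-/

universe v u

open CategoryTheory Limits ZeroObject

/-- Vanishing of (Yoneda) `Ext¹(A, B)`, expressed as: every short exact sequence
`0 → B → E → A → 0` splits. -/
def Ext1Vanishes {C : Type*} [Category C] [Abelian C] (A B : C) : Prop :=
  ∀ (E : C) (f : B ⟶ E) (g : E ⟶ A) (w : f ≫ g = 0),
    (ShortComplex.mk f g w).ShortExact → ∃ s : A ⟶ E, s ≫ g = 𝟙 A

variable {A : Type u} [Category.{v} A] [Abelian A]

noncomputable def diskX (n : ℤ) (C : A) : ℤ → A := fun k => if k = n ∨ k = n - 1 then C else 0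

noncomputable def disk (n : ℤ) (C : A) : ChainComplex A ℤ where
  X := diskX n C
  d i j :=
    if h : i = n ∧ j = n - 1 then
      eqToHom (show diskX n C i = diskX n C j by
        simp [diskX, h.1, h.2, show ¬ (n - 1 = n) by omega])
    else 0
  shape i j hij := by
    try dsimp only
    rw [dif_neg]
    rintro ⟨rfl, rfl⟩
    exact hij (by simp [ComplexShape.down_Rel])
  d_comp_d' i j k _ _ := by
    try dsimp only
    by_cases h1 : i = n ∧ j = n - 1
    · rw [dif_pos h1, dif_neg, comp_zero]
      rintro ⟨h2, -⟩
      obtain ⟨-, h3⟩ := h1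
      omega
    · rw [dif_neg h1, zero_comp]

lemma shortExact_pullback_snd {S : ShortComplex A} (hS : S.ShortExact) {T : A} (φ : T ⟶ S.X₃) :
    (ShortComplex.mk (pullback.lift S.f 0 (by rw [S.zero, zero_comp]) : S.X₁ ⟶ pullback S.g φ)
      (pullback.snd S.g φ) (pullback.lift_snd _ _ _)).ShortExact := by
  have := hS.mono_f
  have := hS.epi_g
  refine .mk' ?_ (mono_of_mono_fac (pullback.lift_fst _ _ _)) inferInstance
  rw [ShortComplex.exact_iff_exact_up_to_refinements]
  intro B x (hx : x ≫ pullback.snd S.g φ = 0)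
  have hx' : (x ≫ pullback.fst S.g φ) ≫ S.g = 0 := by
    rw [Category.assoc, pullback.condition, reassoc_of% hx, zero_comp]
  obtain ⟨B', π, hπ, y, hy⟩ := hS.exact.exact_up_to_refinements _ hx'
  refine ⟨B', π, hπ, y, pullback.hom_ext ?_ ?_⟩ <;> dsimp only
  · rw [Category.assoc, hy, Category.assoc, pullback.lift_fst]
  · rw [Category.assoc, hx, comp_zero, Category.assoc, pullback.lift_snd, comp_zero]

lemma Ext1Vanishes.exists_lift {T : A} {S : ShortComplex A} (h : Ext1Vanishes T S.X₁)
    (hS : S.ShortExact) (φ : T ⟶ S.X₃) : ∃ ψ : T ⟶ S.X₂, ψ ≫ S.g = φ := by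
  obtain ⟨s, hs⟩ := h _ _ _ _ (shortExact_pullback_snd hS φ)
  exact ⟨s ≫ pullback.fst S.g φ, by simp [pullback.condition, reassoc_of% hs]⟩

section Disk

variable (n : ℤ)

noncomputable def diskXIso {k : ℤ} (h : k = n ∨ k = n - 1) (C : A) : (disk n C).X k ≅ C :=
  eqToIso (show (disk n C).X k = C from if_pos h)

lemma isZero_disk_X {k : ℤ} (h : ¬(k = n ∨ k = n - 1)) (C : A) : IsZero ((disk n C).X k) := by
  change IsZero (ite _ _ _)
  rw [if_neg h]
  exact isZero_zero A

lemma disk_d_of_eq (C : A) {i j : ℤ} (hi : i = n) (hj : j = n - 1) :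
    (disk n C).d i j = (diskXIso n (Or.inl hi) C).hom ≫ (diskXIso n (Or.inr hj) C).inv := by
  simp only [diskXIso, eqToIso.hom, eqToIso.inv, eqToHom_trans]
  exact dif_pos ⟨hi, hj⟩

lemma disk_d_eq_zero (C : A) {i j : ℤ} (h : ¬(i = n ∧ j = n - 1)) : (disk n C).d i j = 0 :=
  dif_neg h

noncomputable def diskMap {C D : A} (φ : C ⟶ D) : disk n C ⟶ disk n D where
  f k := if h : k = n ∨ k = n - 1 then (diskXIso n h C).hom ≫ φ ≫ (diskXIso n h D).inv else 0
  comm' i j _ := by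
    rcases em (i = n ∧ j = n - 1) with ⟨rfl, rfl⟩ | h
    · rw [dif_pos (Or.inl rfl), dif_pos (Or.inr rfl), disk_d_of_eq _ C rfl rfl,
        disk_d_of_eq _ D rfl rfl]
      simp
    · rw [disk_d_eq_zero n C h, disk_d_eq_zero n D h, comp_zero, zero_comp]

lemma diskMap_f {C D : A} (φ : C ⟶ D) {k : ℤ} (h : k = n ∨ k = n - 1) :
    (diskMap n φ).f k = (diskXIso n h C).hom ≫ φ ≫ (diskXIso n h D).inv :=
  dif_pos h

lemma diskMap_comp {C D E : A} (φ : C ⟶ D) (ψ : D ⟶ E) :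
    diskMap n φ ≫ diskMap n ψ = diskMap n (φ ≫ ψ) := by
  ext k
  change dite _ _ _ ≫ dite _ _ _ = dite _ _ _
  split_ifs <;> simp

lemma diskMap_zero (C D : A) : diskMap n (0 : C ⟶ D) = 0 := by
  ext k
  change dite _ _ _ = 0
  split_ifs <;> simp

/-- The unit of the adjunction between evaluation in degree `n` and `D^{n+1}`. -/
noncomputable def toDisk (K : ChainComplex A ℤ) : K ⟶ disk (n + 1) (K.X n) where
  f k := if h : k = n + 1 ∨ k = n + 1 - 1 then
      (if hk : k = n then eqToHom (congrArg K.X hk) else K.d k n) ≫ (diskXIso (n + 1) h _).inv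
    else 0
  comm' i j hij := by
    obtain rfl : i = j + 1 := hij.symm
    by_cases hj : j = n
    · subst hj
      rw [dif_pos (Or.inl rfl), dif_neg (by omega), dif_pos (Or.inr (by omega)), dif_pos rfl,
        disk_d_of_eq _ _ rfl (by omega)]
      simp
    · rw [disk_d_eq_zero _ _ (by omega), comp_zero]
      by_cases hj' : j = n + 1
      · subst hj'
        rw [dif_pos (Or.inl rfl), dif_neg (by omega), K.d_comp_d_assoc, zero_comp]
      · rw [dif_neg (by omega), comp_zero]

lemma toDisk_f_hom (K : ChainComplex A ℤ) :
    (toDisk n K).f n ≫ (diskXIso (n + 1) (Or.inr (by omega)) _).hom = 𝟙 (K.X n) := by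
  change dite _ _ _ ≫ _ = _
  rw [dif_pos (Or.inr (by omega)), dif_pos rfl]
  simp

lemma shortExact_diskMap {S : ShortComplex A} (hS : S.ShortExact) :
    (ShortComplex.mk (diskMap n S.f) (diskMap n S.g)
      (by rw [diskMap_comp, S.zero, diskMap_zero])).ShortExact := by
  refine HomologicalComplex.shortExact_of_degreewise_shortExact _ fun k => ?_
  by_cases h : k = n ∨ k = n - 1
  · refine ShortComplex.shortExact_of_iso ?_ hS
    refine ShortComplex.isoMk (diskXIso n h _).symm (diskXIso n h _).symm (diskXIso n h _).symm
      ?_ ?_ <;>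
      simp only [ShortComplex.map_f, ShortComplex.map_g, HomologicalComplex.eval_map,
        diskMap_f n _ h, Iso.symm_hom] <;>
      exact Iso.inv_hom_id_assoc _ _
  · have hX₂ := isZero_disk_X n h S.X₂
    exact .mk' (ShortComplex.exact_of_isZero_X₂ _ hX₂)
      (mono_of_source_iso_zero _ (isZero_disk_X n h S.X₁).isoZero)
      (epi_of_target_iso_zero _ (isZero_disk_X n h S.X₃).isoZero)

variable {n} in
lemma Ext1Vanishes.of_disk {K : ChainComplex A ℤ} {C : A} (h : Ext1Vanishes K (disk (n + 1) C)) :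
    Ext1Vanishes (K.X n) C := by
  intro M i p w hS
  obtain ⟨ψ, hψ⟩ := h.exists_lift (shortExact_diskMap (n + 1) hS) (toDisk n K)
  have hn : n = n + 1 ∨ n = n + 1 - 1 := Or.inr (by omega)
  refine ⟨ψ.f n ≫ (diskXIso (n + 1) hn M).hom, ?_⟩
  have := congrArg (fun φ => φ.f n ≫ (diskXIso (n + 1) hn _).hom) hψ
  simpa [diskMap_f _ _ hn, toDisk_f_hom] using this

end Disk

namespace HomologicalComplex

variable {ι : Type*} {c : ComplexShape ι} (S : ShortComplex (HomologicalComplex A c)) (i j : ι)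

noncomputable def toCyclesPullback :
    S.X₂.X i ⟶ pullback (S.X₂.iCycles j ≫ S.g.f j) (S.X₃.d i j) :=
  pullback.lift (S.X₂.toCycles i j) (S.g.f i) (by rw [toCycles_i_assoc, Hom.comm])

variable {S i j}

lemma degreewise_shortExact (hS : S.ShortExact) (n : ι) :
    (ShortComplex.mk (S.f.f n) (S.g.f n) (by rw [← comp_f, S.zero, zero_f])).ShortExact :=
  (shortExact_iff_degreewise_shortExact S).1 hS n

lemma epi_toCyclesPullback (hS : S.ShortExact) (hij : c.Rel i j) (hX : S.X₁.ExactAt j) :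
    Epi (toCyclesPullback S i j) := by
  have : Epi (S.g.f i) := (degreewise_shortExact hS i).epi_g
  have : Mono (S.f.f (c.next j)) := (degreewise_shortExact hS _).mono_f
  rw [epi_iff_surjective_up_to_refinements]
  intro B y
  obtain ⟨B₁, π₁, _, e, he⟩ := surjective_up_to_refinements_of_epi (S.g.f i) (y ≫ pullback.snd _ _)
  set z := π₁ ≫ y ≫ pullback.fst _ _ ≫ S.X₂.iCycles j - e ≫ S.X₂.d i j with hz_def
  have hz : z ≫ S.g.f j = 0 := by
    have := pullback.condition (f := S.X₂.iCycles j ≫ S.g.f j) (g := S.X₃.d i j)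
    simp only [hz_def, Preadditive.sub_comp, Category.assoc, this, ← Hom.comm]
    rw [← reassoc_of% he, sub_self]
  obtain ⟨B₂, π₂, _, x, hx⟩ := (degreewise_shortExact hS j).exact.exact_up_to_refinements z hz
  have hx' : x ≫ S.X₁.d j (c.next j) = 0 := by
    rw [← cancel_mono (S.f.f (c.next j)), Category.assoc, ← Hom.comm, ← Category.assoc, ← hx,
      hz_def]
    simp
  obtain ⟨B₃, π₃, _, v, hv⟩ := (S.X₁.exactAt_iff_exact_up_to_refinements i j (c.next j)
    (c.prev_eq' hij) rfl).1 hX x hx'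
  refine ⟨B₃, π₃ ≫ π₂ ≫ π₁, inferInstance, π₃ ≫ π₂ ≫ e + v ≫ S.f.f i, pullback.hom_ext ?_ ?_⟩
  · have hvd : v ≫ S.X₁.d i j ≫ S.f.f j = π₃ ≫ π₂ ≫ z := by
      rw [← Category.assoc, ← hv, Category.assoc, hx]
    rw [← cancel_mono (S.X₂.iCycles j)]
    simp [toCyclesPullback, pullback.lift_fst_assoc, hvd, hz_def]
  · simp [toCyclesPullback, pullback.lift_snd, he, ← comp_f]

variable (S i j) in
lemma iCycles_comp_f_comp_toCyclesPullback :
    (S.X₁.iCycles i ≫ S.f.f i) ≫ toCyclesPullback S i j = 0 := by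
  refine pullback.hom_ext ?_ ?_
  · rw [← cancel_mono (S.X₂.iCycles j)]
    simp [toCyclesPullback, pullback.lift_fst_assoc]
  · simp [toCyclesPullback, pullback.lift_snd, ← comp_f]

lemma shortExact_toCyclesPullback (hS : S.ShortExact) (hij : c.Rel i j) (hX : S.X₁.ExactAt j) :
    (ShortComplex.mk _ _ (iCycles_comp_f_comp_toCyclesPullback S i j)).ShortExact := by
  have : Mono (S.f.f i) := (degreewise_shortExact hS i).mono_f
  have : Mono (S.f.f j) := (degreewise_shortExact hS j).mono_f
  refine .mk' ?_ (mono_comp _ _) (epi_toCyclesPullback hS hij hX)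
  rw [ShortComplex.exact_iff_exact_up_to_refinements]
  intro B x hx
  have hxg : x ≫ S.g.f i = 0 := by
    simpa [toCyclesPullback, pullback.lift_snd] using hx =≫ pullback.snd _ _
  have hxd : x ≫ S.X₂.d i j = 0 := by
    simpa [toCyclesPullback, pullback.lift_fst_assoc] using hx =≫ pullback.fst _ _ ≫ S.X₂.iCycles j
  obtain ⟨B', π, _, x₁, hx₁ : π ≫ x = x₁ ≫ S.f.f i⟩ :=
    (degreewise_shortExact hS i).exact.exact_up_to_refinements x hxg
  have hd : x₁ ≫ S.X₁.d i j = 0 := by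
    rw [← cancel_mono (S.f.f j), Category.assoc, ← Hom.comm, ← Category.assoc, ← hx₁,
      Category.assoc, hxd, comp_zero, zero_comp]
  refine ⟨B', π, inferInstance, S.X₁.liftCycles x₁ j (c.next_eq' hij) hd, ?_⟩
  simpa using hx₁

lemma exists_section_comp_d (hS : S.ShortExact) {k : ι} (hij : c.Rel i j) (hjk : c.Rel j k)
    (hX : S.X₁.ExactAt j) (hC : Ext1Vanishes (S.X₃.X i) (S.X₁.cycles i))
    (s : S.X₃.X j ⟶ S.X₂.X j) (hs : s ≫ S.g.f j = 𝟙 _) (hds : S.X₃.d i j ≫ s ≫ S.X₂.d j k = 0) :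
    ∃ t : S.X₃.X i ⟶ S.X₂.X i, t ≫ S.g.f i = 𝟙 _ ∧ t ≫ S.X₂.d i j = S.X₃.d i j ≫ s := by
  obtain ⟨t, ht⟩ := hC.exists_lift (shortExact_toCyclesPullback hS hij hX)
    (pullback.lift (S.X₂.liftCycles (S.X₃.d i j ≫ s) k (c.next_eq' hjk) (by simpa using hds))
      (𝟙 _) (by simp [hs]))
  refine ⟨t, ?_, ?_⟩
  · simpa [toCyclesPullback, pullback.lift_snd] using ht =≫ pullback.snd _ _
  · simpa [toCyclesPullback, pullback.lift_fst_assoc] using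
      ht =≫ pullback.fst _ _ ≫ S.X₂.iCycles j

end HomologicalComplex

section StepSeq

variable {F : ℤ → Sort*} (R : ∀ n, F n → F (n - 1) → Prop) (N : ℤ) (s₀ : ∀ n, F n)

noncomputable def stepSeq (n : ℤ) : F n :=
  if n < N then s₀ n
  else
    haveI : Nonempty (F n) := ⟨s₀ n⟩
    Classical.epsilon fun x => R n x (stepSeq (n - 1))
termination_by (n - N + 1).toNat
decreasing_by all_goals (simp_wf; omega)

theorem rel_stepSeq (h₀ : ∀ n < N, R n (s₀ n) (s₀ (n - 1)))
    (step : ∀ n x y, R (n - 1) x y → ∃ z, R n z x) (n : ℤ) :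
    R n (stepSeq R N s₀ n) (stepSeq R N s₀ (n - 1)) := by
  by_cases hn : n < N
  · rw [stepSeq, if_pos hn, stepSeq, if_pos (by omega)]
    exact h₀ n hn
  · rw [stepSeq, if_neg hn]
    exact Classical.epsilon_spec (step n _ _ (rel_stepSeq h₀ step (n - 1)))
termination_by (n - N + 1).toNat
decreasing_by all_goals (simp_wf; omega)

end StepSeq

lemma ChainComplex.exists_section_of_isIso_below {E K : ChainComplex A ℤ} (g : E ⟶ K) (N : ℤ)
    (hiso : ∀ n < N, IsIso (g.f n))
    (step : ∀ n (s : K.X (n - 1) ⟶ E.X (n - 1)), s ≫ g.f (n - 1) = 𝟙 _ →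
      K.d n (n - 1) ≫ s ≫ E.d (n - 1) (n - 1 - 1) = 0 →
      ∃ t : K.X n ⟶ E.X n, t ≫ g.f n = 𝟙 _ ∧ t ≫ E.d n (n - 1) = K.d n (n - 1) ≫ s) :
    ∃ σ : K ⟶ E, σ ≫ g = 𝟙 K := by
  let R (n : ℤ) (t : K.X n ⟶ E.X n) (s : K.X (n - 1) ⟶ E.X (n - 1)) : Prop :=
    t ≫ g.f n = 𝟙 _ ∧ t ≫ E.d n (n - 1) = K.d n (n - 1) ≫ s
  let s₀ (n : ℤ) : K.X n ⟶ E.X n := if h : n < N then haveI := hiso n h; inv (g.f n) else 0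
  have hs₀ (n : ℤ) (hn : n < N) : s₀ n ≫ g.f n = 𝟙 _ := by
    simp only [s₀, dif_pos hn, IsIso.inv_hom_id]
  have h₀ (n : ℤ) (hn : n < N) : R n (s₀ n) (s₀ (n - 1)) := by
    refine ⟨hs₀ n hn, ?_⟩
    have := hiso (n - 1) (by omega)
    rw [← cancel_mono (g.f (n - 1)), Category.assoc, ← g.comm, reassoc_of% (hs₀ n hn),
      Category.assoc, hs₀ (n - 1) (by omega), Category.comp_id]
  have hR : ∀ n t s, R (n - 1) t s → ∃ z, R n z t := fun n t s hts =>
    step n t hts.1 (by rw [hts.2, K.d_comp_d_assoc, zero_comp])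
  refine ⟨{ f := stepSeq R N s₀, comm' := fun i j hij => ?_ }, ?_⟩
  · obtain rfl : j = i - 1 := by simp at hij; omega
    exact (rel_stepSeq R N s₀ h₀ hR i).2
  · ext n
    exact (rel_stepSeq R N s₀ h₀ hR n).1

theorem cotorsionPair_bddBelow_acyclic_of_disks
    (𝒳 𝒴 : Set (ChainComplex A ℤ))
    (h𝒳 : ∀ K, K ∈ 𝒳 ↔ ∀ L ∈ 𝒴, Ext1Vanishes K L)
    (h𝒴 : ∀ L, L ∈ 𝒴 ↔ ∀ K ∈ 𝒳, Ext1Vanishes K L)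
    (𝒞 : Set A)
    (hD : ∀ (n : ℤ) (C : A), C ∈ 𝒞 → disk n C ∈ 𝒴)
    (X : ChainComplex A ℤ) (hbdd : ∃ N : ℤ, ∀ n < N, IsZero (X.X n))
    (hacyclic : ∀ n, X.ExactAt n)
    (hcycles : ∀ n, X.cycles n ∈ 𝒞) :
    X ∈ 𝒴 := by
  obtain ⟨N, hN⟩ := hbdd
  refine (h𝒴 X).2 fun K hK E f g w hS => ?_
  have hC (n : ℤ) : Ext1Vanishes (K.X n) (X.cycles n) :=
    ((h𝒳 K).1 hK _ (hD (n + 1) _ (hcycles n))).of_disk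
  have hiso (n : ℤ) (hn : n < N) : IsIso (g.f n) :=
    (HomologicalComplex.degreewise_shortExact hS n).isIso_g_iff.2 (hN n hn)
  exact ChainComplex.exists_section_of_isIso_below g N hiso fun n s hs hds =>
    HomologicalComplex.exists_section_comp_d hS (by simp) (by simp) (hacyclic (n - 1)) (hC n) s
      hs hds
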